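/- arXiv:2106.08244 — 5 statements merged into one kernel-verified Lean document; each statement's English description precedes it below -/
import Mathlib

section
/- Let (X,d) be a complete metric space and let G be a group acting on X by isometries. Define the pseudometric d_G on X by d_G(x,y) = inf over g in G of d(g·x, y). Then the metric space obtained by separating X by d_G (i.e., the space of closures of G-orbits with the induced distance) is a complete metric space. -/
/-- For a complete metric space `X` with an isometric action of a group `G`,
the quotient pseudometric `d_G(x,y) = ⨅ g, d(g•x, y)` is complete: every Cauchy sequence
for `d_G` converges for `d_G` (i.e. the separated quotient, the space of orbit closures,
is a complete metric space). -/
theorem stmt_0 {G X : Type*} [Group G] [MetricSpace X] [CompleteSpace X]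
    [MulAction G X]
    (hiso : ∀ (g : G) (x y : X), dist (g • x) (g • y) = dist x y)
    (dG : X → X → ℝ) (hdG : ∀ x y, dG x y = ⨅ g : G, dist (g • x) y)
    (u : ℕ → X)
    (hu : ∀ ε > (0 : ℝ), ∃ N, ∀ m ≥ N, ∀ n ≥ N, dG (u m) (u n) < ε) :
    ∃ y : X, Filter.Tendsto (fun n => dG (u n) y) Filter.atTop (nhds 0) := by
  classical
  -- basic properties of dG
  have bdd : ∀ x z : X, BddBelow (Set.range fun g : G => dist (g • x) z) := by
    intro x z
    exact ⟨0, by rintro _ ⟨g, rfl⟩; exact dist_nonneg⟩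
  have dG_le : ∀ (x z : X) (g : G), dG x z ≤ dist (g • x) z := by
    intro x z g
    rw [hdG]
    exact ciInf_le (bdd x z) g
  have dG_nonneg : ∀ x z : X, 0 ≤ dG x z := by
    intro x z
    rw [hdG]
    exact le_ciInf fun g => dist_nonneg
  have tri : ∀ a c e : X, dG a e ≤ dG a c + dG c e := by
    intro a c e
    have step : ∀ g h : G, dG a e ≤ dist (g • a) c + dist (h • c) e := by
      intro g h
      calc dG a e ≤ dist ((h * g) • a) e := dG_le a e (h * g)
        _ ≤ dist ((h * g) • a) (h • c) + dist (h • c) e := dist_triangle _ _ _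
        _ = dist (g • a) c + dist (h • c) e := by rw [mul_smul, hiso]
    rw [hdG a c, hdG c e, ← sub_le_iff_le_add]
    refine le_ciInf fun g => ?_
    rw [sub_le_iff_le_add, ← sub_le_iff_le_add']
    refine le_ciInf fun h => ?_
    have := step g h
    linarith
  -- extract a rapidly Cauchy subsequence
  have hu' : ∀ k : ℕ, ∃ N, ∀ m ≥ N, ∀ m' ≥ N, dG (u m) (u m') < (1/2 : ℝ) ^ k :=
    fun k => hu _ (by positivity)
  choose N hN using hu'
  set n : ℕ → ℕ := fun k => Nat.rec (N 0) (fun k nk => max nk (N (k + 1))) k with hn_def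
  have hn_succ : ∀ k, n (k + 1) = max (n k) (N (k + 1)) := fun k => rfl
  have hn_ge : ∀ k, N k ≤ n k := by
    intro k
    cases k with
    | zero => exact le_refl _
    | succ k => rw [hn_succ]; exact le_max_right _ _
  have hn_mono : ∀ k, n k ≤ n (k + 1) := by
    intro k; rw [hn_succ]; exact le_max_left _ _
  -- construct representatives
  have key : ∀ (k : ℕ) (x : X) (g : G), ∃ (y : X) (h : G),
      x = g • u (n k) → y = h • u (n (k + 1)) ∧ dist x y < (1/2 : ℝ) ^ k := by
    intro k x g
    have h1 : dG (u (n k)) (u (n (k + 1))) < (1/2 : ℝ) ^ k :=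
      hN k _ (hn_ge k) _ (le_trans (hn_ge k) (hn_mono k))
    rw [hdG] at h1
    obtain ⟨h, hh⟩ := exists_lt_of_ciInf_lt h1
    refine ⟨(g * h⁻¹) • u (n (k + 1)), g * h⁻¹, fun hx => ⟨rfl, ?_⟩⟩
    rw [hx, mul_smul, hiso g, ← hiso h, smul_inv_smul]
    exact hh
  choose Y Hg H using key
  set p : ℕ → X × G := fun k =>
    Nat.rec ((1 : G) • u (n 0), (1 : G)) (fun k q => (Y k q.1 q.2, Hg k q.1 q.2)) k with hp_def
  have hp : ∀ k, (p k).1 = (p k).2 • u (n k) := by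
    intro k
    induction k with
    | zero => rfl
    | succ k ih => exact (H k _ _ ih).1
  have hpd : ∀ k, dist (p k).1 (p (k + 1)).1 < (1/2 : ℝ) ^ k := fun k => (H k _ _ (hp k)).2
  set b : ℕ → X := fun k => (p k).1 with hb_def
  have hcb : CauchySeq b := by
    refine cauchySeq_of_le_geometric (1/2) 1 (by norm_num) fun k => ?_
    rw [one_mul]
    exact (hpd k).le
  obtain ⟨y, hy⟩ := cauchySeq_tendsto_of_complete hcb
  refine ⟨y, ?_⟩
  rw [Metric.tendsto_atTop]
  intro ε hε
  obtain ⟨K1, hK1⟩ := Metric.tendsto_atTop.mp hy (ε / 2) (by linarith)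
  obtain ⟨K2, hK2⟩ := exists_pow_lt_of_lt_one (show (0:ℝ) < ε / 2 by linarith)
    (show (1/2 : ℝ) < 1 by norm_num)
  set k := max K1 K2 with hk_def
  refine ⟨n k, fun m hm => ?_⟩
  have h1 : dG (u m) (u (n k)) < (1/2 : ℝ) ^ k :=
    hN k m (le_trans (hn_ge k) hm) (n k) (hn_ge k)
  have h2 : dG (u (n k)) y ≤ dist (b k) y := by
    have := dG_le (u (n k)) y (p k).2
    rwa [← hp k] at this
  have h3 : dist (b k) y < ε / 2 := hK1 k (le_max_left _ _)
  have h4 : (1/2 : ℝ) ^ k ≤ (1/2 : ℝ) ^ K2 :=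
    pow_le_pow_of_le_one (by norm_num) (by norm_num) (le_max_right _ _)
  have h5 : dG (u m) y ≤ dG (u m) (u (n k)) + dG (u (n k)) y := tri _ _ _
  have h6 : 0 ≤ dG (u m) y := dG_nonneg _ _
  rw [Real.dist_eq, sub_zero, abs_of_nonneg h6]
  linarith
end

section
/- Let G be a topological group and U a base of open neighborhoods of the identity. Then the sets {(g,h) : h ∈ UgU}, for U in the base, form a base of the Roelcke uniformity (the infimum of the left and right uniformities) on G. -/
open Filter
open scoped Uniformity Topology Pointwise SetRel

/-!
The sets `{(g, u g v) : u, v ∈ U}` satisfy the axioms of a uniformity basis (the inverse of `U g U`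
is `U⁻¹ g⁻¹ U⁻¹`, and `V (V g V) V ⊆ U g U` when `V V ⊆ U`), and the uniformity they generate is
coarser than both the left and the right uniformity. Conversely, an entourage of the Roelcke
uniformity contains `t ○ t` for some `t` that is both a left and a right entourage, hence contains
`{(g, u g v)}` for `u, v` near `1`: go from `g` to `g v` by a left step and from `g v` to `u g v`
by a right step.

Mathlib orders uniform structures by inclusion of uniformity filters, so the classical infimum of
the left and right uniformities is their `⊔`.
-/

def roelckeEntourage {G : Type*} [Mul G] (U : Set G) : Set (G × G) :=
  {p | ∃ u ∈ U, ∃ v ∈ U, p.2 = u * p.1 * v}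

section Entourage

variable {G : Type*}

theorem roelckeEntourage_mono [Mul G] : Monotone (roelckeEntourage (G := G)) := by
  rintro U V hUV ⟨g, k⟩ ⟨u, hu, v, hv, hk⟩
  exact ⟨u, hUV hu, v, hUV hv, hk⟩

theorem diag_mem_roelckeEntourage [MulOneClass G] {U : Set G} (hU : (1 : G) ∈ U) (g : G) :
    (g, g) ∈ roelckeEntourage U :=
  ⟨1, hU, 1, hU, by simp⟩

theorem roelckeEntourage_inv_subset [Group G] (U : Set G) :
    roelckeEntourage U⁻¹ ⊆ Prod.swap ⁻¹' roelckeEntourage U := by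
  rintro ⟨g, k⟩ ⟨u, hu, v, hv, (rfl : k = u * g * v)⟩
  exact ⟨u⁻¹, hu, v⁻¹, hv, show g = u⁻¹ * (u * g * v) * v⁻¹ by group⟩

theorem roelckeEntourage_comp_subset [Semigroup G] {U V : Set G} (hVU : V * V ⊆ U) :
    roelckeEntourage V ○ roelckeEntourage V ⊆ roelckeEntourage U := by
  rintro ⟨g, k⟩ ⟨m, ⟨u, hu, v, hv, (rfl : m = u * g * v)⟩, u', hu', v', hv',
    (rfl : k = u' * (u * g * v) * v')⟩
  exact ⟨u' * u, hVU (Set.mul_mem_mul hu' hu), v * v', hVU (Set.mul_mem_mul hv hv'),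
    by simp only [mul_assoc]⟩

theorem roelckeEntourage_subset_comp [Group G] (U : Set G) :
    roelckeEntourage U ⊆ {p : G × G | p.1⁻¹ * p.2 ∈ U} ○ {p : G × G | p.2 * p.1⁻¹ ∈ U} := by
  rintro ⟨g, k⟩ ⟨u, hu, v, hv, (rfl : k = u * g * v)⟩
  exact ⟨g * v, by simpa using hv, by simpa [mul_assoc] using hu⟩

end Entourage

namespace IsTopologicalGroup

variable (G : Type*) [Group G] [TopologicalSpace G] [IsTopologicalGroup G]

theorem comap_inv_rightUniformSpace :
    (rightUniformSpace G).comap (fun g : G => g⁻¹) = leftUniformSpace G := by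
  rw [← comap_inv_leftUniformSpace, ← UniformSpace.comap_comap]
  have : (Equiv.inv G ∘ fun g : G => g⁻¹) = id := funext inv_inv
  rw [this, uniformSpace_comap_id]
  rfl

@[reducible]
def roelckeUniformSpace : UniformSpace G :=
  .ofCore
    { uniformity := (𝓝 (1 : G)).lift' roelckeEntourage
      refl := by
        refine le_lift'.2 fun U hU => mem_principal.2 ?_
        rintro ⟨g, k⟩ (rfl : g = k)
        exact diag_mem_roelckeEntourage (mem_of_mem_nhds hU) g
      symm := tendsto_lift'.2 fun U hU =>
        mem_of_superset (mem_lift' (inv_mem_nhds_one G hU)) (roelckeEntourage_inv_subset U)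
      comp := by
        refine le_lift'.2 fun U hU => ?_
        obtain ⟨V, hV_open, hV_one, hVU⟩ := exists_open_nhds_one_mul_subset hU
        exact mem_of_superset (mem_lift' (mem_lift' (hV_open.mem_nhds hV_one)))
          (roelckeEntourage_comp_subset hVU) }

variable {G}

theorem hasBasis_uniformity_roelckeUniformSpace :
    (𝓤[roelckeUniformSpace G]).HasBasis (fun U : Set G => U ∈ 𝓝 (1 : G)) roelckeEntourage :=
  (𝓝 (1 : G)).basis_sets.lift' roelckeEntourage_mono

theorem hasBasis_uniformity_rightUniformSpace :
    (𝓤[rightUniformSpace G]).HasBasis (fun U : Set G => U ∈ 𝓝 (1 : G))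
      fun U => {p : G × G | p.2 * p.1⁻¹ ∈ U} :=
  (𝓝 (1 : G)).basis_sets.comap _

theorem hasBasis_uniformity_leftUniformSpace :
    (𝓤[leftUniformSpace G]).HasBasis (fun U : Set G => U ∈ 𝓝 (1 : G))
      fun U => {p : G × G | p.1⁻¹ * p.2 ∈ U} :=
  (𝓝 (1 : G)).basis_sets.comap _

theorem rightUniformSpace_le_roelckeUniformSpace :
    rightUniformSpace G ≤ roelckeUniformSpace G :=
  hasBasis_uniformity_rightUniformSpace.le_basis_iff hasBasis_uniformity_roelckeUniformSpace
    |>.2 fun U hU => ⟨U, hU, fun p hp => ⟨_, hp, 1, mem_of_mem_nhds hU, by simp⟩⟩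

theorem leftUniformSpace_le_roelckeUniformSpace :
    leftUniformSpace G ≤ roelckeUniformSpace G :=
  hasBasis_uniformity_leftUniformSpace.le_basis_iff hasBasis_uniformity_roelckeUniformSpace
    |>.2 fun U hU => ⟨U, hU, fun p hp => ⟨1, mem_of_mem_nhds hU, _, hp, by simp⟩⟩

theorem roelckeUniformSpace_le_sup :
    roelckeUniformSpace G ≤ rightUniformSpace G ⊔ leftUniformSpace G := by
  intro t ht
  obtain ⟨t', ht', ht't⟩ := @comp_mem_uniformity_sets G (_ ⊔ _) t ht
  obtain ⟨V, hV, hVt'⟩ :=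
    hasBasis_uniformity_leftUniformSpace.mem_iff.1 (le_sup_right (α := UniformSpace G) ht')
  obtain ⟨W, hW, hWt'⟩ :=
    hasBasis_uniformity_rightUniformSpace.mem_iff.1 (le_sup_left (α := UniformSpace G) ht')
  refine hasBasis_uniformity_roelckeUniformSpace.mem_iff.2 ⟨V ∩ W, inter_mem hV hW, ?_⟩
  calc roelckeEntourage (V ∩ W)
      ⊆ {p : G × G | p.1⁻¹ * p.2 ∈ V ∩ W} ○ {p : G × G | p.2 * p.1⁻¹ ∈ V ∩ W} :=
        roelckeEntourage_subset_comp _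
    _ ⊆ t' ○ t' :=
        SetRel.comp_subset_comp (fun _ hp => hVt' hp.1) (fun _ hp => hWt' hp.2)
    _ ⊆ t := ht't

theorem rightUniformSpace_sup_leftUniformSpace :
    rightUniformSpace G ⊔ leftUniformSpace G = roelckeUniformSpace G :=
  le_antisymm (sup_le rightUniformSpace_le_roelckeUniformSpace
    leftUniformSpace_le_roelckeUniformSpace) roelckeUniformSpace_le_sup

end IsTopologicalGroup

/-- on a topological group `G`, the sets `{(g,h) : h ∈ U g U}` for `U` a
neighborhood of the identity form a basis of the Roelcke uniformity, i.e. of the infimum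
(in the classical sense: the finest uniformity coarser than both, which in Mathlib's order
on `UniformSpace` is the supremum `⊔`) of the right uniformity
`TopologicalGroup.toUniformSpace G` and the left uniformity (its pullback by inversion). -/
theorem stmt_5 {G : Type*} [Group G] [TopologicalSpace G] [IsTopologicalGroup G] :
    (𝓤[(IsTopologicalGroup.rightUniformSpace G) ⊔
        (UniformSpace.comap (fun g : G => g⁻¹) (IsTopologicalGroup.rightUniformSpace G))]).HasBasis
      (fun U : Set G => U ∈ 𝓝 (1 : G))
      (fun U => {p : G × G | ∃ u ∈ U, ∃ v ∈ U, p.2 = u * p.1 * v}) := by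
  rw [IsTopologicalGroup.comap_inv_rightUniformSpace,
    IsTopologicalGroup.rightUniformSpace_sup_leftUniformSpace]
  exact IsTopologicalGroup.hasBasis_uniformity_roelckeUniformSpace
end

section
/- Let G be a Polish group acting continuously by isometries on metric spaces (X, d_X) and (Y, d_Y), and suppose both quotient pseudometric spaces G⫷X and G⫷Y are totally bounded. If moreover for every open neighborhood U of the identity in G there is a finite set F ⊆ G with G = UFU (i.e., G is Roelcke-precompact), then the quotient of the diagonal action on X × Y (with the sum metric) is totally bounded. -/
open scoped Topology

/-!
Choose finite ε/4-nets `X₀`, `Y₀` of the two quotients and a neighbourhood `U` of `1` moving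
every point of `X₀ ∪ Y₀` by less than ε/4. Given `(x, y)`, pick `g`, `h` with `g • x` near
`x₀ ∈ X₀` and `h • y` near `y₀ ∈ Y₀`, and write `h * g⁻¹ = u * f * v` with `u, v ∈ U` and `f`
in the finite set `F` given by Roelcke precompactness. Then `v * g` moves `x` near `v • x₀`,
hence near `x₀`, and moves `y` near `f⁻¹ • u⁻¹ • y₀`, hence near `f⁻¹ • y₀`; so the finitely
many pairs `(x₀, f⁻¹ • y₀)` form an ε-net of the diagonal quotient.
-/

def IsTotallyBoundedQuotient (G X : Type*) [SMul G X] [PseudoMetricSpace X] : Prop :=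
  ∀ ε > (0 : ℝ), ∃ X₀ : Finset X, ∀ x : X, ∃ x₀ ∈ X₀, ∃ g : G, dist (g • x) x₀ < ε

def IsRoelckePrecompact (G : Type*) [Mul G] [One G] [TopologicalSpace G] : Prop :=
  ∀ U ∈ 𝓝 (1 : G), ∃ F : Finset G, ∀ g : G, ∃ u ∈ U, ∃ f ∈ F, ∃ v ∈ U, g = u * f * v

section

variable {G X Y : Type*} [Group G] [MulAction G X] [MulAction G Y]

theorem eventually_forall_finset_dist_smul_lt [TopologicalSpace G] [PseudoMetricSpace X]
    [ContinuousSMul G X] (S : Finset X) {ε : ℝ} (hε : 0 < ε) :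
    ∀ᶠ g in 𝓝 (1 : G), ∀ x ∈ S, dist (g • x) x < ε :=
  (Filter.eventually_all_finset S).2 fun x _ =>
    Metric.tendsto_nhds.1 ((continuous_id.smul continuous_const).tendsto' 1 x (one_smul G x)) ε hε

variable [PseudoMetricSpace X] [PseudoMetricSpace Y] [IsIsometricSMul G X] [IsIsometricSMul G Y]

theorem dist_mul_smul_le (v g : G) (x x₀ : X) :
    dist ((v * g) • x) x₀ ≤ dist (g • x) x₀ + dist (v • x₀) x₀ :=
  calc dist ((v * g) • x) x₀ ≤ dist ((v * g) • x) (v • x₀) + dist (v • x₀) x₀ :=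
        dist_triangle _ _ _
    _ = dist (g • x) x₀ + dist (v • x₀) x₀ := by rw [mul_smul, dist_smul]

theorem IsTotallyBoundedQuotient.prod [TopologicalSpace G] [ContinuousSMul G X]
    [ContinuousSMul G Y] (hX : IsTotallyBoundedQuotient G X) (hY : IsTotallyBoundedQuotient G Y)
    (hG : IsRoelckePrecompact G) :
    ∀ ε > (0 : ℝ), ∃ Z₀ : Finset (X × Y), ∀ z : X × Y, ∃ z₀ ∈ Z₀, ∃ g : G,
      dist (g • z.1) z₀.1 + dist (g • z.2) z₀.2 < ε := by
  classical
  intro ε hε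
  obtain ⟨X₀, hX₀⟩ := hX (ε / 4) (by linarith)
  obtain ⟨Y₀, hY₀⟩ := hY (ε / 4) (by linarith)
  obtain ⟨F, hF⟩ := hG _ ((eventually_forall_finset_dist_smul_lt X₀ (by linarith : 0 < ε / 4)).and
    (eventually_forall_finset_dist_smul_lt Y₀ (by linarith : 0 < ε / 4)))
  refine ⟨(X₀ ×ˢ (F ×ˢ Y₀)).image fun p => (p.1, p.2.1⁻¹ • p.2.2), ?_⟩
  rintro ⟨x, y⟩
  obtain ⟨x₀, hx₀, g, hgx⟩ := hX₀ x
  obtain ⟨y₀, hy₀, h, hhy⟩ := hY₀ y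
  obtain ⟨u, hu, f, hf, v, hv, hhg⟩ := hF (h * g⁻¹)
  refine ⟨(x₀, f⁻¹ • y₀), Finset.mem_image.2 ⟨(x₀, f, y₀), by simp [hx₀, hf, hy₀], rfl⟩,
    v * g, ?_⟩
  have hx : dist ((v * g) • x) x₀ < ε / 2 := by
    linarith [dist_mul_smul_le v g x x₀, hv.1 x₀ hx₀]
  have hh : h = u * (f * (v * g)) := by
    rw [show h = h * g⁻¹ * g by group, hhg]
    group
  have hy : dist ((v * g) • y) (f⁻¹ • y₀) < ε / 2 := by
    have : dist ((v * g) • y) (f⁻¹ • y₀) = dist (h • y) (u • y₀) := by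
      rw [hh, mul_smul u, dist_smul, mul_smul f, ← dist_smul f, smul_inv_smul]
    linarith [dist_triangle_right (h • y) (u • y₀) y₀, hu.2 y₀ hy₀]
  linarith

end

theorem stmt_7_general {G X Y : Type*} [Group G] [TopologicalSpace G]
    [MetricSpace X] [MetricSpace Y] [MulAction G X] [MulAction G Y]
    (hcontX : Continuous (fun p : G × X => p.1 • p.2))
    (hcontY : Continuous (fun p : G × Y => p.1 • p.2))
    (hisoX : ∀ (g : G) (x x' : X), dist (g • x) (g • x') = dist x x')
    (hisoY : ∀ (g : G) (y y' : Y), dist (g • y) (g • y') = dist y y')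
    (htbX : ∀ ε > (0:ℝ), ∃ X₀ : Finset X, ∀ x : X, ∃ x₀ ∈ X₀, ∃ g : G, dist (g • x) x₀ < ε)
    (htbY : ∀ ε > (0:ℝ), ∃ Y₀ : Finset Y, ∀ y : Y, ∃ y₀ ∈ Y₀, ∃ g : G, dist (g • y) y₀ < ε)
    (hRoelcke : ∀ U ∈ 𝓝 (1 : G), ∃ F : Finset G, ∀ g : G,
      ∃ u ∈ U, ∃ f ∈ F, ∃ v ∈ U, g = u * f * v) :
    ∀ ε > (0:ℝ), ∃ Z₀ : Finset (X × Y), ∀ z : X × Y, ∃ z₀ ∈ Z₀, ∃ g : G,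
      dist (g • z.1) z₀.1 + dist (g • z.2) z₀.2 < ε := by
  have : ContinuousSMul G X := ⟨hcontX⟩
  have : ContinuousSMul G Y := ⟨hcontY⟩
  have : IsIsometricSMul G X := ⟨fun g => Isometry.of_dist_eq (hisoX g)⟩
  have : IsIsometricSMul G Y := ⟨fun g => Isometry.of_dist_eq (hisoY g)⟩
  exact IsTotallyBoundedQuotient.prod htbX htbY hRoelcke

/-- if a Roelcke-precompact Polish group `G` acts continuously by isometries on
metric spaces `X` and `Y` with totally bounded quotient pseudometrics, then the quotient of
the diagonal action on `X × Y` (with the sum metric) is totally bounded. -/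
theorem stmt_7 {G X Y : Type*} [Group G] [TopologicalSpace G] [IsTopologicalGroup G]
    [PolishSpace G] [MetricSpace X] [MetricSpace Y] [MulAction G X] [MulAction G Y]
    (hcontX : Continuous (fun p : G × X => p.1 • p.2))
    (hcontY : Continuous (fun p : G × Y => p.1 • p.2))
    (hisoX : ∀ (g : G) (x x' : X), dist (g • x) (g • x') = dist x x')
    (hisoY : ∀ (g : G) (y y' : Y), dist (g • y) (g • y') = dist y y')
    (htbX : ∀ ε > (0:ℝ), ∃ X₀ : Finset X, ∀ x : X, ∃ x₀ ∈ X₀, ∃ g : G, dist (g • x) x₀ < ε)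
    (htbY : ∀ ε > (0:ℝ), ∃ Y₀ : Finset Y, ∀ y : Y, ∃ y₀ ∈ Y₀, ∃ g : G, dist (g • y) y₀ < ε)
    (hRoelcke : ∀ U ∈ 𝓝 (1 : G), ∃ F : Finset G, ∀ g : G,
      ∃ u ∈ U, ∃ f ∈ F, ∃ v ∈ U, g = u * f * v) :
    ∀ ε > (0:ℝ), ∃ Z₀ : Finset (X × Y), ∀ z : X × Y, ∃ z₀ ∈ Z₀, ∃ g : G,
      dist (g • z.1) z₀.1 + dist (g • z.2) z₀.2 < ε :=
  stmt_7_general hcontX hcontY hisoX hisoY htbX htbY hRoelcke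
end

section
/- Let X be a set and f, g : X → ℝ≥0 bounded functions such that for every ε > 0 there exists δ > 0 with: for all x ∈ X, f(x) ≤ δ implies g(x) ≤ ε. Then there exists a continuous function α : ℝ≥0 → ℝ≥0 with α(0) = 0 such that g(x) ≤ α(f(x)) for all x ∈ X. -/
/-!
Take `C` bounding `g` and, for each `ε > 0`, the `δ` of the hypothesis. Then
`g x ≤ ε + (C / δ) * f x` for every `x` and every `ε`, so `g x ≤ α (f x)` where `α` is the lower
envelope `t ↦ inf_ε (ε + (C / δ) * t)`. An infimum of affine functions is concave, hence
continuous on `(0, ∞)`; at `0` it is squeezed between `0` and `ε + (C / δ) * t`, which gives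
`α 0 = 0` and continuity there.
-/

open NNReal Set Filter Topology

theorem ConcaveOn.ciInf {E ι : Type*} [AddCommMonoid E] [Module ℝ E] [Nonempty ι] {s : Set E}
    {F : ι → E → ℝ} (hF : ∀ i, ConcaveOn ℝ s (F i))
    (hbdd : ∀ x ∈ s, BddBelow (range fun i => F i x)) :
    ConcaveOn ℝ s fun x => ⨅ i, F i x := by
  refine ⟨(hF (Classical.arbitrary ι)).1, fun x hx y hy a b ha hb hab => le_ciInf fun i => ?_⟩
  calc a • (⨅ i, F i x) + b • ⨅ i, F i y ≤ a • F i x + b • F i y := by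
        gcongr
        exacts [ciInf_le (hbdd x hx) i, ciInf_le (hbdd y hy) i]
    _ ≤ F i (a • x + b • y) := (hF i).2 hx hy ha hb hab

theorem le_add_div_mul_of_le_imp_le {u v ε δ C : ℝ≥0} (hδ : 0 < δ) (hv : v ≤ C)
    (h : u ≤ δ → v ≤ ε) : v ≤ ε + C / δ * u := by
  rcases le_or_gt u δ with hu | hu
  · exact (h hu).trans le_self_add
  · calc v ≤ C / δ * δ := by rwa [div_mul_cancel₀ _ hδ.ne']
      _ ≤ C / δ * u := by gcongr
      _ ≤ ε + C / δ * u := le_add_self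

section LowerEnvelope

variable {ι : Type*} (a b : ι → ℝ≥0)

noncomputable def lowerEnvelope (t : ℝ≥0) : ℝ≥0 := ⨅ i, (a i + b i * t)

theorem lowerEnvelope_le (i : ι) (t : ℝ≥0) : lowerEnvelope a b t ≤ a i + b i * t :=
  ciInf_le (OrderBot.bddBelow _) i

theorem le_lowerEnvelope [Nonempty ι] {c t : ℝ≥0} (h : ∀ i, c ≤ a i + b i * t) :
    c ≤ lowerEnvelope a b t :=
  le_ciInf h

theorem coe_lowerEnvelope (t : ℝ≥0) :
    (lowerEnvelope a b t : ℝ) = ⨅ i, ((a i : ℝ) + b i * t) := by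
  simp [lowerEnvelope, NNReal.coe_iInf]

theorem concaveOn_iInf_affine [Nonempty ι] :
    ConcaveOn ℝ (Ici 0) fun t : ℝ => ⨅ i, ((a i : ℝ) + b i * t) := by
  refine ConcaveOn.ciInf (fun i => (concaveOn_const _ (convex_Ici 0)).add
    ((concaveOn_id (convex_Ici 0)).smul (b i).coe_nonneg)) fun t ht => ⟨0, ?_⟩
  rintro _ ⟨i, rfl⟩
  have : (0 : ℝ) ≤ t := ht
  positivity

theorem continuousAt_lowerEnvelope_of_pos [Nonempty ι] {t : ℝ≥0} (ht : 0 < t) :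
    ContinuousAt (lowerEnvelope a b) t := by
  have hA : ContinuousAt (fun t : ℝ => ⨅ i, ((a i : ℝ) + b i * t)) t := by
    have := (concaveOn_iInf_affine a b).continuousOn_interior
    rw [interior_Ici] at this
    exact this.continuousAt (Ioi_mem_nhds ht)
  have heq : lowerEnvelope a b = fun t : ℝ≥0 => (⨅ i, ((a i : ℝ) + b i * t)).toNNReal := by
    ext t
    rw [coe_lowerEnvelope, Real.coe_toNNReal _ (by rw [← coe_lowerEnvelope]; positivity)]
  rw [heq]
  exact continuous_real_toNNReal.continuousAt.comp
    (hA.comp NNReal.continuous_coe.continuousAt)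

variable {a b}

theorem lowerEnvelope_zero (ha : ∀ ε > 0, ∃ i, a i < ε) : lowerEnvelope a b 0 = 0 := by
  by_contra hne
  obtain ⟨i, hi⟩ := ha _ (pos_iff_ne_zero.2 hne)
  exact hi.not_ge (by simpa using lowerEnvelope_le a b i 0)

theorem continuousAt_lowerEnvelope_zero (ha : ∀ ε > 0, ∃ i, a i < ε) :
    ContinuousAt (lowerEnvelope a b) 0 := by
  rw [ContinuousAt, lowerEnvelope_zero ha]
  refine tendsto_order.2 ⟨fun c hc => absurd hc not_lt_zero, fun c hc => ?_⟩
  obtain ⟨i, hi⟩ := ha c hc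
  have hlim : Tendsto (fun t => a i + b i * t) (𝓝 0) (𝓝 (a i)) := by
    exact (by fun_prop : Continuous fun t : ℝ≥0 => a i + b i * t).tendsto' 0 _ (by simp)
  filter_upwards [hlim.eventually (gt_mem_nhds hi)] with t ht
  exact (lowerEnvelope_le a b i t).trans_lt ht

theorem continuous_lowerEnvelope (ha : ∀ ε > 0, ∃ i, a i < ε) :
    Continuous (lowerEnvelope a b) := by
  obtain ⟨i, -⟩ := ha 1 one_pos
  have : Nonempty ι := ⟨i⟩
  refine continuous_iff_continuousAt.2 fun t => ?_
  rcases eq_zero_or_pos t with rfl | ht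
  · exact continuousAt_lowerEnvelope_zero ha
  · exact continuousAt_lowerEnvelope_of_pos a b ht

end LowerEnvelope

theorem stmt_10_general {X : Type*} (f g : X → NNReal)
    (hg : ∃ C, ∀ x, g x ≤ C)
    (h : ∀ ε : NNReal, 0 < ε → ∃ δ : NNReal, 0 < δ ∧ ∀ x, f x ≤ δ → g x ≤ ε) :
    ∃ α : NNReal → NNReal, Continuous α ∧ α 0 = 0 ∧ ∀ x, g x ≤ α (f x) := by
  obtain ⟨C, hC⟩ := hg
  choose δ hδ_pos hδ using fun ε : {ε : ℝ≥0 // 0 < ε} => h ε ε.2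
  have ha : ∀ c > 0, ∃ ε : {ε : ℝ≥0 // 0 < ε}, ε.1 < c := fun c hc =>
    ⟨⟨c / 2, half_pos hc⟩, half_lt_self hc⟩
  refine ⟨lowerEnvelope (fun ε => ε.1) (fun ε => C / δ ε), continuous_lowerEnvelope ha,
    lowerEnvelope_zero ha, fun x => ?_⟩
  have : Nonempty {ε : ℝ≥0 // 0 < ε} := ⟨⟨1, one_pos⟩⟩
  exact le_lowerEnvelope _ _ fun ε => le_add_div_mul_of_le_imp_le (hδ_pos ε) (hC x) (hδ ε x)

/-- if `f, g : X → ℝ≥0` are bounded functions such that for every `ε > 0`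
there is `δ > 0` with `f x ≤ δ → g x ≤ ε`, then there is a continuous `α : ℝ≥0 → ℝ≥0`
with `α 0 = 0` and `g x ≤ α (f x)` for all `x`. -/
theorem stmt_10 {X : Type*} (f g : X → NNReal)
    (hf : ∃ C, ∀ x, f x ≤ C) (hg : ∃ C, ∀ x, g x ≤ C)
    (h : ∀ ε : NNReal, 0 < ε → ∃ δ : NNReal, 0 < δ ∧ ∀ x, f x ≤ δ → g x ≤ ε) :
    ∃ α : NNReal → NNReal, Continuous α ∧ α 0 = 0 ∧ ∀ x, g x ≤ α (f x) :=
  stmt_10_general f g hg h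
end

section
/- Let (X,d) be a nonempty complete metric space. A continuous function f : X → ℝ≥0 equals the distance function to the (nonempty) set of its zeros if and only if for every x ∈ X: (1) inf_{y∈X} max(f(y), |f(x) − d(x,y)|) = 0, and (2) f(x) = inf_{y∈X} (f(y) + d(x,y)). -/
open Metric Filter

/-- Auxiliary: from condition (1) we can find approximate zeros at controlled distance. -/
lemma stmt_11_aux {X : Type*} [MetricSpace X] [Nonempty X]
    (f : X → ℝ)
    (h1 : ∀ x, (⨅ y : X, max (f y) |f x - dist x y|) = 0) :
    ∀ x : X, ∀ ε : ℝ, 0 < ε → ∃ y, f y < ε ∧ dist x y < f x + ε := by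
  intro x ε hε
  have hlt : (⨅ y : X, max (f y) |f x - dist x y|) < ε := by rw [h1 x]; exact hε
  obtain ⟨y, hy⟩ := exists_lt_of_ciInf_lt hlt
  refine ⟨y, lt_of_le_of_lt (le_max_left _ _) hy, ?_⟩
  have h2 : |f x - dist x y| < ε := lt_of_le_of_lt (le_max_right _ _) hy
  have := abs_lt.1 h2
  linarith [this.1]

/-- Auxiliary: construct an actual zero at controlled distance, via completeness. -/
lemma stmt_11_zero {X : Type*} [MetricSpace X] [CompleteSpace X] [Nonempty X]
    (f : X → ℝ) (hf : Continuous f) (hpos : ∀ x, 0 ≤ f x)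
    (H : ∀ x : X, ∀ ε : ℝ, 0 < ε → ∃ y, f y < ε ∧ dist x y < f x + ε) :
    ∀ x0 : X, ∀ ε : ℝ, 0 < ε → ∃ z, f z = 0 ∧ dist x0 z ≤ f x0 + ε := by
  intro x0 ε hε
  -- δ n = (ε/8) * (1/2)^n
  set δ : ℕ → ℝ := fun n => (ε / 8) * (1 / 2) ^ n with hδ
  have hδpos : ∀ n, 0 < δ n := fun n => by positivity
  have hpick : ∀ (p : X × ℕ), ∃ y, f y < δ p.2 ∧ dist p.1 y < f p.1 + δ p.2 :=
    fun p => H p.1 (δ p.2) (hδpos p.2)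
  choose g hg1 hg2 using hpick
  -- the sequence
  let u : ℕ → X := fun n => Nat.rec x0 (fun n xn => g (xn, n)) n
  have hu0 : u 0 = x0 := rfl
  have hus : ∀ n, u (n + 1) = g (u n, n) := fun n => rfl
  have hfu : ∀ n, f (u (n + 1)) < δ n := fun n => hg1 (u n, n)
  have hdu : ∀ n, dist (u n) (u (n + 1)) < f (u n) + δ n := fun n => hg2 (u n, n)
  -- the shifted sequence is geometric-Cauchy
  have key : ∀ n, dist (u (n + 1)) (u (n + 2)) ≤ (3 * (ε / 16)) * (1 / 2) ^ n := by
    intro n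
    have h1 := hdu (n + 1)
    have h2 := hfu n
    have : dist (u (n + 1)) (u (n + 2)) < δ n + δ (n + 1) := by linarith
    have hδn : δ n + δ (n + 1) ≤ (3 * (ε / 16)) * (1 / 2) ^ n := by
      simp only [hδ, pow_succ]
      ring_nf
      nlinarith [pow_pos (by norm_num : (0:ℝ) < 1/2) n]
    linarith
  set v : ℕ → X := fun n => u (n + 1) with hv
  have hvC : CauchySeq v := by
    apply cauchySeq_of_le_geometric (1/2) (3 * (ε / 16)) (by norm_num)
    intro n; exact key n
  obtain ⟨z, hz⟩ := cauchySeq_tendsto_of_complete hvC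
  have hdvz : dist (v 0) z ≤ (3 * (ε / 16)) / (1 - 1/2) :=
    dist_le_of_le_geometric_of_tendsto₀ (1/2) (3 * (ε / 16)) (by norm_num) (fun n => key n) hz
  -- f z = 0
  have hfz : f z = 0 := by
    have htend : Tendsto (fun n => f (v n)) atTop (nhds (f z)) :=
      (hf.tendsto z).comp hz
    have hle : Tendsto (fun n => f (v n)) atTop (nhds 0) := by
      have h0 : Tendsto δ atTop (nhds 0) := by
        have := tendsto_pow_atTop_nhds_zero_of_lt_one (by norm_num : (0:ℝ) ≤ 1/2)
          (by norm_num : (1:ℝ)/2 < 1)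
        simpa [hδ] using this.const_mul (ε / 8)
      refine squeeze_zero (fun n => hpos _) (fun n => (hfu n).le) h0
    exact tendsto_nhds_unique htend hle
  refine ⟨z, hfz, ?_⟩
  have hd0 : dist x0 (v 0) < f x0 + δ 0 := by simpa [hv, hu0] using hdu 0
  have := dist_triangle x0 (v 0) z
  have hδ0 : δ 0 = ε / 8 := by simp [hδ]
  have : dist x0 z ≤ f x0 + ε / 8 + (3 * (ε / 16)) / (1 - 1/2) := by
    calc dist x0 z ≤ dist x0 (v 0) + dist (v 0) z := dist_triangle _ _ _
    _ ≤ (f x0 + δ 0) + (3 * (ε / 16)) / (1 - 1/2) := add_le_add hd0.le hdvz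
    _ = f x0 + ε / 8 + (3 * (ε / 16)) / (1 - 1/2) := by rw [hδ0]
  have hr : (3 * (ε / 16)) / (1 - 1/2) = 3 * ε / 8 := by norm_num; ring
  rw [hr] at this
  linarith

/-- on a nonempty complete metric space, a continuous nonnegative function `f`
equals the distance function to the (nonempty) set of its zeros iff for every `x`:
(1) `⨅ y, max (f y) |f x - d(x,y)| = 0` and (2) `f x = ⨅ y, (f y + d(x,y))`. -/
theorem stmt_11 {X : Type*} [MetricSpace X] [CompleteSpace X] [Nonempty X]
    (f : X → ℝ) (hf : Continuous f) (hpos : ∀ x, 0 ≤ f x) :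
    (({x | f x = 0}).Nonempty ∧ ∀ x, f x = Metric.infDist x {y | f y = 0}) ↔
    ((∀ x, (⨅ y : X, max (f y) |f x - dist x y|) = 0) ∧
      (∀ x, f x = ⨅ y : X, (f y + dist x y))) := by
  set Z : Set X := {x | f x = 0} with hZdef
  constructor
  · rintro ⟨hZ, hfd⟩
    constructor
    · -- condition (1)
      intro x
      have hbdd : BddBelow (Set.range fun y => max (f y) |f x - dist x y|) := by
        refine ⟨0, ?_⟩
        rintro r ⟨y, rfl⟩
        exact le_trans (hpos y) (le_max_left _ _)
      refine le_antisymm ?_ (le_ciInf fun y => le_trans (hpos y) (le_max_left _ _))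
      by_contra hcon
      push_neg at hcon
      obtain ⟨z, hzZ, hzd⟩ := (infDist_lt_iff hZ).1 (by
        rw [← hfd x]
        linarith [hcon] :
        infDist x Z < f x + (⨅ y : X, max (f y) |f x - dist x y|))
      have hle : (⨅ y : X, max (f y) |f x - dist x y|) ≤ max (f z) |f x - dist x z| :=
        ciInf_le hbdd z
      have hfz : f z = 0 := hzZ
      have hxd : f x ≤ dist x z := by rw [hfd x]; exact infDist_le_dist_of_mem hzZ
      have habs : |f x - dist x z| < ⨅ y : X, max (f y) |f x - dist x y| := by
        rw [abs_sub_comm, abs_of_nonneg (by linarith)]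
        linarith
      have : max (f z) |f x - dist x z| < ⨅ y : X, max (f y) |f x - dist x y| := by
        rw [hfz]
        exact max_lt (by linarith [hcon]) habs
      linarith
    · -- condition (2)
      intro x
      have hbdd : BddBelow (Set.range fun y => f y + dist x y) := by
        refine ⟨0, ?_⟩
        rintro r ⟨y, rfl⟩
        exact add_nonneg (hpos y) dist_nonneg
      refine le_antisymm (le_ciInf fun y => ?_) ?_
      · rw [hfd x, hfd y]
        exact infDist_le_infDist_add_dist
      · have := ciInf_le hbdd x
        simpa using this
  · rintro ⟨h1, h2⟩
    have H := stmt_11_aux f h1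
    have key := stmt_11_zero f hf hpos H
    have hZ : Z.Nonempty := by
      obtain ⟨x⟩ := (inferInstance : Nonempty X)
      obtain ⟨z, hz, -⟩ := key x 1 one_pos
      exact ⟨z, hz⟩
    refine ⟨hZ, fun x => ?_⟩
    refine le_antisymm ?_ ?_
    · -- f x ≤ infDist x Z
      by_contra hcon
      push_neg at hcon
      obtain ⟨z, hzZ, hzd⟩ := (infDist_lt_iff hZ).1 hcon
      have hbdd : BddBelow (Set.range fun y => f y + dist x y) := by
        refine ⟨0, ?_⟩
        rintro r ⟨y, rfl⟩
        exact add_nonneg (hpos y) dist_nonneg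
      have : f x ≤ f z + dist x z := by
        rw [h2 x]; exact ciInf_le hbdd z
      have hfz : f z = 0 := hzZ
      linarith
    · -- infDist x Z ≤ f x
      have : ∀ ε : ℝ, 0 < ε → infDist x Z ≤ f x + ε := by
        intro ε hε
        obtain ⟨z, hz, hd⟩ := key x ε hε
        exact le_trans (infDist_le_dist_of_mem hz) hd
      by_contra hcon
      push_neg at hcon
      have := this ((infDist x Z - f x) / 2) (by linarith)
      linarith
end
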